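/- Let G be a finite group with a cyclic, index 2 subgroup. Then D(G) >= |G|/2 + |G'|, where G' = [G,G] is the commutator subgroup and D(G) is the large Davenport constant. -/

import Mathlib

/-- The set of products of a multiset `S` over `G`: all elements obtained by
multiplying the terms of `S` in some order. -/
def prodSet {G : Type*} [Group G] (S : Multiset G) : Set G :=
  {g | ∃ l : List G, (l : Multiset G) = S ∧ l.prod = g}

/-- `S` is a product-one sequence if its terms can be ordered with product `1`. -/
def IsProductOne {G : Type*} [Group G] (S : Multiset G) : Prop :=
  (1 : G) ∈ prodSet S

/-- `S` is product-one free if no nonempty sub-multiset is a product-one sequence. -/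
def ProductOneFree {G : Type*} [Group G] (S : Multiset G) : Prop :=
  ∀ T : Multiset G, T ≤ S → T ≠ 0 → ¬ IsProductOne T

/-- `S` is a minimal product-one sequence (an atom): a nonempty product-one sequence
that cannot be factored into two nonempty product-one sub-multisets. -/
def IsMinimalProductOne {G : Type*} [Group G] (S : Multiset G) : Prop :=
  S ≠ 0 ∧ IsProductOne S ∧
    ¬ ∃ T T' : Multiset G, S = T + T' ∧ T ≠ 0 ∧ T' ≠ 0 ∧ IsProductOne T ∧ IsProductOne T'

/-- The small Davenport constant: the supremum of lengths of product-one free sequences. -/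
noncomputable def smallDavenport (G : Type*) [Group G] : ℕ∞ :=
  sSup {n : ℕ∞ | ∃ S : Multiset G, ProductOneFree S ∧ (S.card : ℕ∞) = n}

/-- The large Davenport constant: the supremum of lengths of minimal product-one sequences. -/
noncomputable def largeDavenport (G : Type*) [Group G] : ℕ∞ :=
  sSup {n : ℕ∞ | ∃ S : Multiset G, IsMinimalProductOne S ∧ (S.card : ℕ∞) = n}

/-!
Write `H = ⟨g⟩` with `n = |g|`, pick `α ∉ H` and let `α g α⁻¹ = g ^ r`. Modulo `⟨c⟩`, where
`c = g ^ (r - 1)` has order `m`, the images of `g` and `α` commute, so `G' ≤ ⟨c⟩` and `|G'| ≤ m`.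
With `β = α⁻¹ g ^ (r + 1 - m)` every ordered product `α g^i β g^j` equals `c^(i+1) g^(i+j+2-m)`,
so `α β g^[n+m-2]` is a product-one sequence of length `n + m` (take `i = m - 1`, `j = n - 1`).
Since product-one sequences have an even number of terms outside `H`, a factorisation would
split off a block `g^[n]` and leave `α β g^[m-2]`, whose products `c^(i+1)` with `0 < i + 1 < m`
are never `1`.
-/

open Subgroup Multiset
open scoped Classical

namespace List

variable {G : Type*} [Group G]

theorem prod_mem_iff_even_countP_notMem {H : Subgroup G} (hH : H.index = 2) (l : List G) :
    l.prod ∈ H ↔ Even (l.countP (· ∉ H)) := by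
  induction l with
  | nil => simp [H.one_mem]
  | cons x l ih =>
    rw [prod_cons, mul_mem_iff_of_index_two hH, ih, countP_cons]
    by_cases hx : x ∈ H <;> simp [hx, Nat.even_add_one]

theorem eq_replicate_append_cons_replicate {α : Type*} {b g : α} {k : ℕ} {l : List α}
    (hl : (l : Multiset α) = b ::ₘ Multiset.replicate k g) :
    ∃ i j, i + j = k ∧ l = List.replicate i g ++ b :: List.replicate j g := by
  obtain ⟨l₁, l₂, rfl⟩ := List.append_of_mem (Multiset.mem_coe.1 (hl ▸ Multiset.mem_cons_self b _))
  have h : ((l₁ ++ l₂ : List α) : Multiset α) = Multiset.replicate k g := by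
    rw [← Multiset.cons_inj_right b, ← hl]
    exact (Multiset.coe_eq_coe.2 List.perm_middle).symm
  have hg : ∀ x ∈ l₁ ++ l₂, x = g := fun x hx =>
    Multiset.eq_of_mem_replicate (h ▸ Multiset.mem_coe.2 hx)
  refine ⟨l₁.length, l₂.length, by simpa using congrArg Multiset.card h, ?_⟩
  rw [← List.eq_replicate_iff.2 ⟨rfl, fun x hx => hg x (by simp [hx])⟩,
    ← List.eq_replicate_iff.2 ⟨rfl, fun x hx => hg x (by simp [hx])⟩]

end List

section ProductOne

variable {G : Type*} [Group G]

theorem isProductOne_cons_iff {a : G} {S : Multiset G} :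
    IsProductOne (a ::ₘ S) ↔ ∃ l : List G, (l : Multiset G) = S ∧ a * l.prod = 1 := by
  constructor
  · rintro ⟨l, hl, hprod⟩
    obtain ⟨l₁, l₂, rfl⟩ := List.append_of_mem (Multiset.mem_coe.1 (hl ▸ mem_cons_self a S))
    refine ⟨l₂ ++ l₁, ?_, ?_⟩
    · rw [← cons_inj_right a, ← hl]
      exact Multiset.coe_eq_coe.2 (List.perm_middle.trans (List.perm_append_comm.cons a)).symm
    · rw [List.prod_append, List.prod_cons, mul_eq_one_comm] at hprod
      rwa [List.prod_append, ← mul_assoc]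
  · rintro ⟨l, rfl, hprod⟩
    exact ⟨a :: l, rfl, by rw [List.prod_cons, hprod]⟩

theorem isProductOne_cons_cons_replicate_iff {a b g : G} {k : ℕ} :
    IsProductOne (a ::ₘ b ::ₘ replicate k g) ↔ ∃ i j, i + j = k ∧ a * g ^ i * b * g ^ j = 1 := by
  rw [isProductOne_cons_iff]
  constructor
  · rintro ⟨l, hl, hprod⟩
    obtain ⟨i, j, hij, rfl⟩ := List.eq_replicate_append_cons_replicate hl
    exact ⟨i, j, hij, by simpa [mul_assoc] using hprod⟩
  · rintro ⟨i, j, rfl, hprod⟩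
    refine ⟨List.replicate i g ++ b :: List.replicate j g, ?_, by simpa [mul_assoc] using hprod⟩
    rw [Multiset.replicate_add, ← coe_replicate, ← coe_replicate, Multiset.coe_add,
      Multiset.cons_coe, Multiset.coe_eq_coe]
    exact List.perm_middle

theorem isProductOne_replicate_iff {g : G} {k : ℕ} : IsProductOne (replicate k g) ↔ g ^ k = 1 := by
  constructor
  · rintro ⟨l, hl, hprod⟩
    rw [← coe_replicate, Multiset.coe_eq_coe, List.perm_replicate] at hl
    rwa [hl, List.prod_replicate] at hprod
  · intro h
    exact ⟨List.replicate k g, rfl, by rwa [List.prod_replicate]⟩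

theorem IsProductOne.even_countP_notMem {H : Subgroup G} (hH : H.index = 2) {S : Multiset G}
    (hS : IsProductOne S) : Even (S.countP (· ∉ H)) := by
  obtain ⟨l, rfl, hprod⟩ := hS
  rw [Multiset.coe_countP, ← List.prod_mem_iff_even_countP_notMem hH, hprod]
  exact H.one_mem

theorem IsMinimalProductOne.card_le_largeDavenport {S : Multiset G} (hS : IsMinimalProductOne S) :
    (card S : ℕ∞) ≤ largeDavenport G :=
  le_sSup ⟨S, hS, rfl⟩

theorem isMinimalProductOne_cons_cons_replicate {H : Subgroup G} (hH : H.index = 2)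
    {a b g : G} {k : ℕ} (ha : a ∉ H) (hb : b ∉ H) (hg : g ∈ H)
    (hS : IsProductOne (a ::ₘ b ::ₘ replicate k g))
    (hsplit : ∀ i j, i + j = k → 0 < j → g ^ j = 1 →
      ¬ IsProductOne (a ::ₘ b ::ₘ replicate i g)) :
    IsMinimalProductOne (a ::ₘ b ::ₘ replicate k g) := by
  refine ⟨cons_ne_zero, hS, ?_⟩
  have key : ∀ U V, a ::ₘ b ::ₘ replicate k g = U + V → V ≠ 0 → IsProductOne U →
      IsProductOne V → V.countP (· ∉ H) = 0 → False := by
    intro U V hUV hV hU hVone hVH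
    rw [countP_eq_zero] at hVH
    have hVle : V ≤ replicate k g := by
      have hle : V ≤ a ::ₘ b ::ₘ replicate k g := hUV ▸ le_add_left V U
      rwa [le_cons_of_notMem (fun h => hVH a h ha), le_cons_of_notMem (fun h => hVH b h hb)] at hle
    obtain ⟨j, hjk, rfl⟩ := le_replicate_iff.1 hVle
    have hU' : U = a ::ₘ b ::ₘ replicate (k - j) g := by
      apply add_right_cancel (b := replicate j g)
      rw [← hUV, cons_add, cons_add, ← replicate_add, Nat.sub_add_cancel hjk]
    refine hsplit (k - j) j (by omega) (Nat.pos_of_ne_zero ?_)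
      (isProductOne_replicate_iff.1 hVone) (hU' ▸ hU)
    rintro rfl
    exact hV rfl
  rintro ⟨T, T', hTT', hT, hT', hTone, hT'one⟩
  have hcount : T.countP (· ∉ H) + T'.countP (· ∉ H) = 2 := by
    rw [← countP_add, ← hTT']
    simp [ha, hb, countP_eq_zero, mem_replicate, hg]
  obtain ⟨x, hx⟩ := hTone.even_countP_notMem hH
  obtain ⟨y, hy⟩ := hT'one.even_countP_notMem hH
  rcases (by omega : T.countP (· ∉ H) = 0 ∨ T'.countP (· ∉ H) = 0) with h0 | h0
  · exact key T' T (by rw [hTT', add_comm]) hT hT'one hTone h0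
  · exact key T T' hTT' hT' hTone hT'one h0

end ProductOne

section CyclicIndexTwo

variable {G : Type*} [Group G] {g α : G} {r : ℤ}

theorem Subgroup.Normal.zpowers_zpow (hg : (zpowers g).Normal) (k : ℤ) :
    (zpowers (g ^ k)).Normal := by
  refine ⟨fun y hy x => ?_⟩
  obtain ⟨i, rfl⟩ := mem_zpowers_iff.1 hy
  obtain ⟨t, ht⟩ := mem_zpowers_iff.1 (hg.conj_mem g (mem_zpowers g) x)
  have : x * (g ^ k) ^ i * x⁻¹ = (g ^ k) ^ (t * i) := by
    rw [← zpow_mul, ← conj_zpow, ← ht, ← zpow_mul, ← zpow_mul, mul_left_comm]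
  exact this ▸ zpow_mem (mem_zpowers _) _

theorem exists_zpow_eq_or_zpow_mul_eq (hH : (zpowers g).index = 2) (hα : α ∉ zpowers g)
    (x : G) : (∃ i : ℤ, g ^ i = x) ∨ ∃ i : ℤ, g ^ i * α = x := by
  by_cases hx : x ∈ zpowers g
  · exact Or.inl hx
  · have : x * α⁻¹ ∈ zpowers g := by
      rw [mul_mem_iff_of_index_two hH, inv_mem_iff]
      exact iff_of_false hx hα
    obtain ⟨i, hi⟩ := mem_zpowers_iff.1 this
    exact Or.inr ⟨i, by rw [hi, inv_mul_cancel_right]⟩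

theorem commutator_le_zpowers_zpow_sub_one (hH : (zpowers g).index = 2) (hα : α ∉ zpowers g)
    (hr : α * g * α⁻¹ = g ^ r) : commutator G ≤ zpowers (g ^ (r - 1)) := by
  set K := zpowers (g ^ (r - 1))
  have : K.Normal := (normal_of_index_eq_two hH).zpowers_zpow (r - 1)
  have hgα : Commute (g : G ⧸ K) α := by
    have hK : ((g ^ (r - 1) : G) : G ⧸ K) = 1 := (QuotientGroup.eq_one_iff _).2 (mem_zpowers _)
    have : α * g = g ^ (r - 1) * g * α := by
      rw [← zpow_add_one, sub_add_cancel, ← hr, inv_mul_cancel_right]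
    show ((g * α : G) : G ⧸ K) = ((α * g : G) : G ⧸ K)
    rw [this, mul_assoc, QuotientGroup.mk_mul K (g ^ (r - 1)), hK, one_mul]
  have hcomm : ∀ x : G, Commute (x : G ⧸ K) g ∧ Commute (x : G ⧸ K) α := by
    intro x
    rcases exists_zpow_eq_or_zpow_mul_eq hH hα x with ⟨i, rfl⟩ | ⟨i, rfl⟩
    · simp only [QuotientGroup.mk_zpow]
      exact ⟨(Commute.refl _).zpow_left i, hgα.zpow_left i⟩
    · simp only [QuotientGroup.mk_mul, QuotientGroup.mk_zpow]
      exact ⟨((Commute.refl _).zpow_left i).mul_left hgα.symm,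
        (hgα.zpow_left i).mul_left (Commute.refl _)⟩
  rw [_root_.commutator_def, commutator_le]
  intro x _ y _
  rw [← QuotientGroup.eq_one_iff, ← QuotientGroup.mk'_apply, map_commutatorElement,
    commutatorElement_eq_one_iff_commute]
  rcases exists_zpow_eq_or_zpow_mul_eq hH hα y with ⟨j, rfl⟩ | ⟨j, rfl⟩
  · simpa using (hcomm x).1.zpow_right j
  · simpa using ((hcomm x).1.zpow_right j).mul_right (hcomm x).2

theorem le_largeDavenport_of_conj_eq_zpow (hH : (zpowers g).index = 2) (hα : α ∉ zpowers g)
    (hg : IsOfFinOrder g) (hr : α * g * α⁻¹ = g ^ r) :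
    ((orderOf g + orderOf (g ^ (r - 1)) : ℕ) : ℕ∞) ≤ largeDavenport G := by
  set n := orderOf g
  set c := g ^ (r - 1)
  set m := orderOf c
  have hn : 0 < n := hg.orderOf_pos
  have hm : 0 < m := hg.zpow.orderOf_pos
  have hmn : m ≤ n := Nat.le_of_dvd hn <| orderOf_dvd_of_pow_eq_one <| by
    rw [← zpow_natCast, ← zpow_mul, mul_comm, zpow_mul, zpow_natCast, pow_orderOf_eq_one, one_zpow]
  set β := α⁻¹ * g ^ (r + 1 - m) with hβ_def
  have hβ : β ∉ zpowers g := by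
    rw [hβ_def, mul_mem_iff_of_index_two hH, inv_mem_iff]
    exact fun h => hα (h.2 (zpow_mem (mem_zpowers g) _))
  have hprod (i j : ℕ) : α * g ^ i * β * g ^ j = c ^ (i + 1) * g ^ ((i + j : ℕ) + 2 - m : ℤ) := by
    have hconj : α * g ^ i * α⁻¹ = g ^ (r * i) := by rw [← conj_pow, hr, ← zpow_natCast, ← zpow_mul]
    calc α * g ^ i * β * g ^ j = (α * g ^ i * α⁻¹) * g ^ (r + 1 - m) * g ^ j := by
          rw [hβ_def]; group
      _ = g ^ ((r - 1) * (i + 1) + ((i + j : ℕ) + 2 - m)) := by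
        rw [hconj, ← zpow_natCast g j, ← zpow_add, ← zpow_add]
        congr 1
        push_cast
        ring
      _ = _ := by rw [zpow_add, zpow_mul, ← zpow_natCast (g ^ (r - 1))]; push_cast; rfl
  have hS : IsMinimalProductOne (α ::ₘ β ::ₘ replicate (n + m - 2) g) := by
    refine isMinimalProductOne_cons_cons_replicate hH hα hβ (mem_zpowers g) ?_ ?_
    · refine isProductOne_cons_cons_replicate_iff.2 ⟨m - 1, n - 1, by omega, ?_⟩
      rw [hprod, Nat.sub_add_cancel hm, pow_orderOf_eq_one, one_mul,
        show ((m - 1 + (n - 1) : ℕ) : ℤ) + 2 - m = n by omega, zpow_natCast, pow_orderOf_eq_one]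
    · intro i j hij hj hgj
      have hi : i + 2 = m := by
        obtain ⟨t, rfl⟩ : n ∣ j := orderOf_dvd_of_pow_eq_one hgj
        have ht : t < 2 := Nat.lt_of_mul_lt_mul_left (a := n) (by omega)
        interval_cases t <;> omega
      rw [isProductOne_cons_cons_replicate_iff]
      rintro ⟨i', j', hij', hone⟩
      rw [hprod, hij', show ((i : ℕ) : ℤ) + 2 - m = 0 by omega, zpow_zero, mul_one] at hone
      exact pow_ne_one_of_lt_orderOf (Nat.succ_ne_zero i') (by omega) hone
  calc ((n + m : ℕ) : ℕ∞) = card (α ::ₘ β ::ₘ replicate (n + m - 2) g) := by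
        simp only [card_cons, card_replicate]; congr 1; omega
    _ ≤ largeDavenport G := hS.card_le_largeDavenport

end CyclicIndexTwo

/-- If a finite group `G` has a cyclic, index `2` subgroup, then
`D(G) ≥ |G|/2 + |G'|`. -/
theorem largeDavenport_lower_bound (G : Type*) [Group G] [Finite G]
    (h : ∃ H : Subgroup G, IsCyclic H ∧ H.index = 2) :
    ((Nat.card G / 2 + Nat.card (commutator G) : ℕ) : ℕ∞) ≤ largeDavenport G := by
  obtain ⟨H, hcyc, hH⟩ := h
  obtain ⟨g, rfl⟩ := H.isCyclic_iff_exists_zpowers_eq_top.1 hcyc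
  obtain ⟨α, hα⟩ : ∃ α, α ∉ zpowers g := by
    by_contra! hall
    rw [(eq_top_iff' _).2 hall, index_top] at hH
    omega
  obtain ⟨r, hr⟩ := mem_zpowers_iff.1 ((normal_of_index_eq_two hH).conj_mem g (mem_zpowers g) α)
  have hcard : Nat.card G / 2 = orderOf g := by
    rw [← (zpowers g).card_mul_index, hH, Nat.card_zpowers, Nat.mul_div_cancel _ two_pos]
  have hcomm : Nat.card (commutator G) ≤ orderOf (g ^ (r - 1)) := by
    rw [← Nat.card_zpowers]
    exact Subgroup.card_le_of_le (commutator_le_zpowers_zpow_sub_one hH hα hr.symm)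
  calc ((Nat.card G / 2 + Nat.card (commutator G) : ℕ) : ℕ∞)
      ≤ ((orderOf g + orderOf (g ^ (r - 1)) : ℕ) : ℕ∞) := by gcongr; omega
    _ ≤ largeDavenport G :=
      le_largeDavenport_of_conj_eq_zpow hH hα (isOfFinOrder_of_finite g) hr.symm
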